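/- arXiv:2206.13679 — 3 statements merged into one kernel-verified Lean document; each statement's English description precedes it below -/
import Mathlib

section
/- Let ρ = (ρ_α)_{α∈I} be a family of risk measures on a convex cone X of random variables containing all constants, with ρ_α(X) decreasing in α, let α ∈ I and X = (X_1,…,X_n) ∈ X^n, and assume ρ is left continuous and non-flat from the left at (α, X_1+⋯+X_n). Suppose ρ_0(X_1+⋯+X_n) ≤ ess-sup(X_1+⋯+X_n), where ρ_0(Y) := sup_{β∈I} ρ_β(Y). If X_1+⋯+X_n ≤ ρ_α(X_1)+⋯+ρ_α(X_n) a.s., then DQ^ρ_α(X) = 0. Conversely, if ρ_0(X_1+⋯+X_n) = ess-sup(X_1+⋯+X_n) and DQ^ρ_α(X) = 0, then X_1+⋯+X_n ≤ ρ_α(X_1)+⋯+ρ_α(X_n) a.s. -/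
open MeasureTheory Filter

open scoped Classical in
/-- The diversification quotient `DQ^ρ_α` built from the family `ρ = (ρ_β)_{β ∈ I}`,
with index set `I = (0, ᾱ)` and the convention `inf ∅ = ᾱ`. -/
noncomputable def DQ {Ω : Type*} {n : ℕ} (αbar : EReal) (ρ : ℝ → (Ω → ℝ) → ℝ)
    (α : ℝ) (X : Fin n → Ω → ℝ) : EReal :=
  (if ({β : ℝ | 0 < β ∧ (β : EReal) < αbar ∧
        ρ β (fun ω => ∑ i, X i ω) ≤ ∑ i, ρ α (X i)}).Nonempty
    then ((sInf {β : ℝ | 0 < β ∧ (β : EReal) < αbar ∧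
        ρ β (fun ω => ∑ i, X i ω) ≤ ∑ i, ρ α (X i)} : ℝ) : EReal)
    else αbar) * ((α⁻¹ : ℝ) : EReal)

/-!
Write `S = X₁ + ⋯ + Xₙ` and `c = ρ_α(X₁) + ⋯ + ρ_α(Xₙ)`. Since `β ↦ ρ_β(S)` is decreasing,
`DQ^ρ_α(X) = 0`, i.e. `inf {β ∈ I : ρ_β(S) ≤ c} = 0`, holds exactly when `ρ_β(S) ≤ c` for every
`β ∈ I`, that is, when `ρ_0(S) ≤ c`. On the other side, `S ≤ c` a.s. says `ess-sup S ≤ c`.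
The two hypotheses on `ρ_0(S)` versus `ess-sup S` connect these two inequalities.
-/

theorem essSup_le_iff_ae_le {α β : Type*} [MeasurableSpace α] {μ : Measure α}
    [CompleteLinearOrder β] [TopologicalSpace β] [FirstCountableTopology β] [OrderTopology β]
    {f : α → β} {c : β} : essSup f μ ≤ c ↔ ∀ᵐ x ∂μ, f x ≤ c :=
  ⟨fun h => (ae_le_essSup).mono fun _ hx => hx.trans h, essSup_le_of_ae_le c⟩

theorem sum_apply_mem {Ω ι : Type*} {𝒳 : Set (Ω → ℝ)} (hadd : ∀ X ∈ 𝒳, ∀ Y ∈ 𝒳, X + Y ∈ 𝒳)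
    (hzero : (fun _ : Ω => (0 : ℝ)) ∈ 𝒳) (s : Finset ι) {X : ι → Ω → ℝ} (hX : ∀ i, X i ∈ 𝒳) :
    (fun ω => ∑ i ∈ s, X i ω) ∈ 𝒳 := by
  simpa only [← Finset.sum_apply] using
    Finset.sum_induction X (· ∈ 𝒳) (fun X Y hX hY => hadd X hX Y hY) hzero fun i _ => hX i

section DQ

variable {Ω : Type*} {n : ℕ} {αbar : EReal} {ρ : ℝ → (Ω → ℝ) → ℝ} {α : ℝ} {X : Fin n → Ω → ℝ}

def dqLevels (αbar : EReal) (ρ : ℝ → (Ω → ℝ) → ℝ) (α : ℝ) (X : Fin n → Ω → ℝ) : Set ℝ :=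
  {β : ℝ | 0 < β ∧ (β : EReal) < αbar ∧ ρ β (fun ω => ∑ i, X i ω) ≤ ∑ i, ρ α (X i)}

theorem DQ_eq_zero_iff (hα : 0 < α) (hαbar : 0 < αbar) :
    DQ αbar ρ α X = 0 ↔ (dqLevels αbar ρ α X).Nonempty ∧ sInf (dqLevels αbar ρ α X) = 0 := by
  have hα' : ((α⁻¹ : ℝ) : EReal) ≠ 0 := EReal.coe_ne_zero.2 (inv_ne_zero hα.ne')
  unfold DQ
  split_ifs with hne
  · rw [← EReal.coe_mul, EReal.coe_eq_zero, mul_eq_zero, or_iff_left (inv_ne_zero hα.ne')]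
    exact ⟨fun h => ⟨hne, h⟩, And.right⟩
  · exact iff_of_false (mul_ne_zero hαbar.ne' hα') fun h => hne h.1

theorem DQ_eq_zero_of_forall_le (hα : 0 < α) (hαI : (α : EReal) < αbar)
    (h : ∀ β : ℝ, 0 < β → (β : EReal) < αbar →
      ρ β (fun ω => ∑ i, X i ω) ≤ ∑ i, ρ α (X i)) :
    DQ αbar ρ α X = 0 := by
  have hsub : Set.Ioc 0 α ⊆ dqLevels αbar ρ α X := fun β ⟨hβ, hβα⟩ =>
    have hβI : (β : EReal) < αbar := (EReal.coe_le_coe_iff.2 hβα).trans_lt hαI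
    ⟨hβ, hβI, h β hβ hβI⟩
  have hbdd : BddBelow (dqLevels αbar ρ α X) := ⟨0, fun _ hβ => hβ.1.le⟩
  have hne : (dqLevels αbar ρ α X).Nonempty := ⟨α, hsub ⟨hα, le_rfl⟩⟩
  refine (DQ_eq_zero_iff hα ((EReal.coe_pos.2 hα).trans hαI)).2 ⟨hne, le_antisymm ?_ ?_⟩
  · calc sInf (dqLevels αbar ρ α X) ≤ sInf (Set.Ioc 0 α) :=
          csInf_le_csInf hbdd (Set.nonempty_Ioc.2 hα) hsub
      _ = 0 := csInf_Ioc hα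
  · exact le_csInf hne fun _ hβ => hβ.1.le

theorem forall_le_of_DQ_eq_zero (hα : 0 < α) (hαbar : 0 < αbar)
    (hanti : AntitoneOn (fun β => ρ β (fun ω => ∑ i, X i ω)) {β | 0 < β ∧ (β : EReal) < αbar})
    (hDQ : DQ αbar ρ α X = 0) (β : ℝ) (hβ : 0 < β) (hβI : (β : EReal) < αbar) :
    ρ β (fun ω => ∑ i, X i ω) ≤ ∑ i, ρ α (X i) := by
  obtain ⟨hne, hinf⟩ := (DQ_eq_zero_iff hα hαbar).1 hDQ
  obtain ⟨γ, ⟨hγ, hγI, hγle⟩, hγβ⟩ := (csInf_lt_iff ⟨0, fun _ h => h.1.le⟩ hne).1 (hinf ▸ hβ)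
  exact (hanti ⟨hγ, hγI⟩ ⟨hβ, hβI⟩ hγβ.le).trans hγle

end DQ

theorem stmt_5_general {Ω : Type*} [MeasurableSpace Ω] (μ : Measure Ω)
    (𝒳 : Set (Ω → ℝ))
    (hadd : ∀ X ∈ 𝒳, ∀ Y ∈ 𝒳, X + Y ∈ 𝒳)
    (hconst : ∀ c : ℝ, (fun _ : Ω => c) ∈ 𝒳)
    (αbar : EReal) (hαbar : 0 < αbar)
    (ρ : ℝ → (Ω → ℝ) → ℝ)
    (hdec : ∀ Y ∈ 𝒳, ∀ β γ : ℝ, 0 < β → (β : EReal) < αbar → 0 < γ → (γ : EReal) < αbar →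
      β ≤ γ → ρ γ Y ≤ ρ β Y)
    (α : ℝ) (hα : 0 < α) (hαI : (α : EReal) < αbar)
    (n : ℕ) (X : Fin n → Ω → ℝ) (hX : ∀ i, X i ∈ 𝒳) :
    (((⨆ (β : ℝ) (_ : 0 < β) (_ : (β : EReal) < αbar),
          ((ρ β (fun ω => ∑ i, X i ω) : ℝ) : EReal))
        ≤ essSup (fun ω => ((∑ i, X i ω : ℝ) : EReal)) μ) →
      (∀ᵐ ω ∂μ, ∑ i, X i ω ≤ ∑ i, ρ α (X i)) → DQ αbar ρ α X = 0)
    ∧ (((⨆ (β : ℝ) (_ : 0 < β) (_ : (β : EReal) < αbar),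
          ((ρ β (fun ω => ∑ i, X i ω) : ℝ) : EReal))
        = essSup (fun ω => ((∑ i, X i ω : ℝ) : EReal)) μ) →
      DQ αbar ρ α X = 0 →
      (∀ᵐ ω ∂μ, ∑ i, X i ω ≤ ∑ i, ρ α (X i))) := by
  have hsum : (fun ω => ∑ i, X i ω) ∈ 𝒳 := sum_apply_mem hadd (hconst 0) _ hX
  have hρ₀ : (⨆ (β : ℝ) (_ : 0 < β) (_ : (β : EReal) < αbar),
        ((ρ β (fun ω => ∑ i, X i ω) : ℝ) : EReal)) ≤ ((∑ i, ρ α (X i) : ℝ) : EReal) ↔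
      ∀ β : ℝ, 0 < β → (β : EReal) < αbar →
        ρ β (fun ω => ∑ i, X i ω) ≤ ∑ i, ρ α (X i) := by
    simp only [iSup_le_iff, EReal.coe_le_coe_iff]
  have hess : essSup (fun ω => ((∑ i, X i ω : ℝ) : EReal)) μ ≤ ((∑ i, ρ α (X i) : ℝ) : EReal) ↔
      ∀ᵐ ω ∂μ, ∑ i, X i ω ≤ ∑ i, ρ α (X i) := by
    simp only [essSup_le_iff_ae_le, EReal.coe_le_coe_iff]
  refine ⟨fun hsup hae => ?_, fun hsup hDQ => ?_⟩
  · exact DQ_eq_zero_of_forall_le hα hαI (hρ₀.1 (hsup.trans (hess.2 hae)))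
  · have hanti : AntitoneOn (fun β => ρ β (fun ω => ∑ i, X i ω))
        {β | 0 < β ∧ (β : EReal) < αbar} := fun β hβ γ hγ hβγ =>
      hdec _ hsum β γ hβ.1 hβ.2 hγ.1 hγ.2 hβγ
    exact hess.1 (hsup ▸ hρ₀.2 (forall_le_of_DQ_eq_zero hα hαbar hanti hDQ))

/-- no insolvency risk with pooled individual capital and `DQ^ρ_α = 0`
(Theorem on interpreting DQ, part (i)). -/
theorem stmt_5 {Ω : Type*} [MeasurableSpace Ω] (μ : Measure Ω) [IsProbabilityMeasure μ]
    (hatomless : ∀ s : Set Ω, MeasurableSet s → 0 < μ s →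
      ∃ t, t ⊆ s ∧ MeasurableSet t ∧ 0 < μ t ∧ μ t < μ s)
    (𝒳 : Set (Ω → ℝ))
    (hadd : ∀ X ∈ 𝒳, ∀ Y ∈ 𝒳, X + Y ∈ 𝒳)
    (hsmul : ∀ X ∈ 𝒳, ∀ c : ℝ, 0 < c → c • X ∈ 𝒳)
    (hconst : ∀ c : ℝ, (fun _ : Ω => c) ∈ 𝒳)
    (αbar : EReal) (hαbar : 0 < αbar)
    (ρ : ℝ → (Ω → ℝ) → ℝ)
    (hdec : ∀ Y ∈ 𝒳, ∀ β γ : ℝ, 0 < β → (β : EReal) < αbar → 0 < γ → (γ : EReal) < αbar →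
      β ≤ γ → ρ γ Y ≤ ρ β Y)
    (α : ℝ) (hα : 0 < α) (hαI : (α : EReal) < αbar)
    (n : ℕ) (hn : 0 < n) (X : Fin n → Ω → ℝ) (hX : ∀ i, X i ∈ 𝒳)
    (hlc : Tendsto (fun β => ρ β (fun ω => ∑ i, X i ω)) (nhdsWithin α (Set.Iio α))
      (nhds (ρ α (fun ω => ∑ i, X i ω))))
    (hnf : ∀ β : ℝ, 0 < β → β < α →
      ρ α (fun ω => ∑ i, X i ω) < ρ β (fun ω => ∑ i, X i ω)) :
    (((⨆ (β : ℝ) (_ : 0 < β) (_ : (β : EReal) < αbar),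
          ((ρ β (fun ω => ∑ i, X i ω) : ℝ) : EReal))
        ≤ essSup (fun ω => ((∑ i, X i ω : ℝ) : EReal)) μ) →
      (∀ᵐ ω ∂μ, ∑ i, X i ω ≤ ∑ i, ρ α (X i)) → DQ αbar ρ α X = 0)
    ∧ (((⨆ (β : ℝ) (_ : 0 < β) (_ : (β : EReal) < αbar),
          ((ρ β (fun ω => ∑ i, X i ω) : ℝ) : EReal))
        = essSup (fun ω => ((∑ i, X i ω : ℝ) : EReal)) μ) →
      DQ αbar ρ α X = 0 →
      (∀ᵐ ω ∂μ, ∑ i, X i ω ≤ ∑ i, ρ α (X i))) :=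
  stmt_5_general μ 𝒳 hadd hconst αbar hαbar ρ hdec α hα hαI n X hX
end

section
/- Let ρ = (ρ_α)_{α∈I} be a family of risk measures on a convex cone X of random variables containing all constants, with ρ_α(X) decreasing in α, and let α ∈ I. (i) If there exists m ∈ ℝ such that every ρ_β, β ∈ I, satisfies [CA]_m (ρ_β(X+c) = ρ_β(X)+mc for all c ∈ ℝ), and ρ_α(0) = 0, then DQ^ρ_α satisfies riskless invariance [RI]: DQ^ρ_α(X_1,…,X_n,c) = DQ^ρ_α(X_1,…,X_n) for all (X_1,…,X_n) ∈ X^n and c ∈ ℝ. (ii) If every ρ_β, β ∈ I, satisfies positive homogeneity [PH] (ρ_β(λX) = λρ_β(X) for all λ > 0), then DQ^ρ_α satisfies replication consistency [RC]: DQ^ρ_α(X_1,…,X_n,X_1,…,X_n) = DQ^ρ_α(X_1,…,X_n) for all (X_1,…,X_n) ∈ X^n. -/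
open MeasureTheory Filter

/-! `DQ^ρ_α(X)` only sees, for each `β ∈ I`, whether `ρ_β(∑ Xᵢ) ≤ ∑ ρ_α(Xᵢ)`. Appending a constant
`c` shifts both sides of this inequality by `m c` (under [CA]_m and `ρ_α(0) = 0`), and replicating
the portfolio doubles both sides (under [PH]), so the set whose infimum defines `DQ` is unchanged. -/

section DQ

variable {Ω : Type*} {αbar : EReal} {ρ : ℝ → (Ω → ℝ) → ℝ} {α : ℝ}

theorem DQ_congr {n k : ℕ} {X : Fin n → Ω → ℝ} {Y : Fin k → Ω → ℝ}
    (h : ∀ β : ℝ, 0 < β → (β : EReal) < αbar →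
      (ρ β (fun ω => ∑ i, Y i ω) ≤ ∑ i, ρ α (Y i) ↔
        ρ β (fun ω => ∑ i, X i ω) ≤ ∑ i, ρ α (X i))) :
    DQ αbar ρ α Y = DQ αbar ρ α X := by
  have hset : {β : ℝ | 0 < β ∧ (β : EReal) < αbar ∧
        ρ β (fun ω => ∑ i, Y i ω) ≤ ∑ i, ρ α (Y i)}
      = {β : ℝ | 0 < β ∧ (β : EReal) < αbar ∧
        ρ β (fun ω => ∑ i, X i ω) ≤ ∑ i, ρ α (X i)} :=
    Set.ext fun β => and_congr_right fun hβ => and_congr_right (h β hβ)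
  unfold DQ
  rw [hset]

theorem DQ_snoc_of_map_add {n : ℕ} (X : Fin n → Ω → ℝ) (Z : Ω → ℝ)
    (h : ∀ β : ℝ, 0 < β → (β : EReal) < αbar →
      ρ β ((fun ω => ∑ i, X i ω) + Z) = ρ β (fun ω => ∑ i, X i ω) + ρ α Z) :
    DQ αbar ρ α (Fin.snoc X Z) = DQ αbar ρ α X := by
  refine DQ_congr fun β hβ hβI => ?_
  have hsum : (fun ω => ∑ i, (Fin.snoc X Z : Fin (n + 1) → Ω → ℝ) i ω)
      = (fun ω => ∑ i, X i ω) + Z := by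
    funext ω
    simp [Fin.sum_univ_castSucc]
  rw [hsum, h β hβ hβI, Fin.sum_univ_castSucc]
  simp only [Fin.snoc_castSucc, Fin.snoc_last, add_le_add_iff_right]

theorem DQ_append_self_of_map_two_smul {n : ℕ} (X : Fin n → Ω → ℝ)
    (h : ∀ β : ℝ, 0 < β → (β : EReal) < αbar →
      ρ β ((2 : ℝ) • fun ω => ∑ i, X i ω) = 2 * ρ β (fun ω => ∑ i, X i ω)) :
    DQ αbar ρ α (Fin.append X X) = DQ αbar ρ α X := by
  refine DQ_congr fun β hβ hβI => ?_
  have hsum : (fun ω => ∑ i, Fin.append X X i ω) = (2 : ℝ) • fun ω => ∑ i, X i ω := by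
    funext ω
    simp only [Fin.sum_univ_add, Fin.append_left, Fin.append_right, Pi.smul_apply, smul_eq_mul,
      two_mul]
  have hrisk : ∑ i, ρ α (Fin.append X X i) = 2 * ∑ i, ρ α (X i) := by
    simp only [Fin.sum_univ_add, Fin.append_left, Fin.append_right, two_mul]
  rw [hsum, hrisk, h β hβ hβI, mul_le_mul_iff_right₀ two_pos]

end DQ

theorem stmt_10_general {Ω : Type*} (𝒳 : Set (Ω → ℝ))
    (hadd : ∀ X ∈ 𝒳, ∀ Y ∈ 𝒳, X + Y ∈ 𝒳)
    (hconst : ∀ c : ℝ, (fun _ : Ω => c) ∈ 𝒳)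
    (αbar : EReal)
    (ρ : ℝ → (Ω → ℝ) → ℝ)
    (α : ℝ) (hα : 0 < α) (hαI : (α : EReal) < αbar) :
    -- (i) [RI]
    (∀ m : ℝ,
      (∀ β : ℝ, 0 < β → (β : EReal) < αbar → ∀ Y ∈ 𝒳, ∀ c : ℝ,
        ρ β (Y + (fun _ => c)) = ρ β Y + m * c) →
      ρ α (fun _ => (0 : ℝ)) = 0 →
      ∀ (n : ℕ), 0 < n → ∀ (X : Fin n → Ω → ℝ), (∀ i, X i ∈ 𝒳) → ∀ c : ℝ,
        DQ αbar ρ α (Fin.snoc X (fun _ => c)) = DQ αbar ρ α X)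
    -- (ii) [RC]
    ∧ ((∀ β : ℝ, 0 < β → (β : EReal) < αbar → ∀ Y ∈ 𝒳, ∀ l : ℝ, 0 < l →
        ρ β (l • Y) = l * ρ β Y) →
      ∀ (n : ℕ), 0 < n → ∀ (X : Fin n → Ω → ℝ), (∀ i, X i ∈ 𝒳) →
        DQ αbar ρ α (Fin.append X X) = DQ αbar ρ α X) := by
  have hsum_mem : ∀ {n : ℕ} (X : Fin n → Ω → ℝ), (∀ i, X i ∈ 𝒳) → (fun ω => ∑ i, X i ω) ∈ 𝒳 :=
    fun X hX => by
      simpa only [← Finset.sum_apply] using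
        Finset.sum_induction X (· ∈ 𝒳) (fun a b ha hb => hadd a ha b hb) (hconst 0)
          fun i _ => hX i
  refine ⟨fun m hCA h0 n _ X hX c => ?_, fun hPH n _ X hX => ?_⟩
  · have hρc : ρ α (fun _ => c) = m * c := by
      simpa [h0, Pi.add_def] using hCA α hα hαI _ (hconst 0) c
    exact DQ_snoc_of_map_add X _ fun β hβ hβI => by
      rw [hCA β hβ hβI _ (hsum_mem X hX) c, hρc]
  · exact DQ_append_self_of_map_two_smul X fun β hβ hβI =>
      hPH β hβ hβI _ (hsum_mem X hX) 2 two_pos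

/-- (i) riskless invariance [RI] of DQ under [CA]_m with `ρ_α(0)=0`;
(ii) replication consistency [RC] of DQ under [PH]. -/
theorem stmt_10 {Ω : Type*} (𝒳 : Set (Ω → ℝ))
    (hadd : ∀ X ∈ 𝒳, ∀ Y ∈ 𝒳, X + Y ∈ 𝒳)
    (hsmul : ∀ X ∈ 𝒳, ∀ c : ℝ, 0 < c → c • X ∈ 𝒳)
    (hconst : ∀ c : ℝ, (fun _ : Ω => c) ∈ 𝒳)
    (αbar : EReal) (hαbar : 0 < αbar)
    (ρ : ℝ → (Ω → ℝ) → ℝ)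
    (hdec : ∀ Y ∈ 𝒳, ∀ β γ : ℝ, 0 < β → (β : EReal) < αbar → 0 < γ → (γ : EReal) < αbar →
      β ≤ γ → ρ γ Y ≤ ρ β Y)
    (α : ℝ) (hα : 0 < α) (hαI : (α : EReal) < αbar) :
    -- (i) [RI]
    (∀ m : ℝ,
      (∀ β : ℝ, 0 < β → (β : EReal) < αbar → ∀ Y ∈ 𝒳, ∀ c : ℝ,
        ρ β (Y + (fun _ => c)) = ρ β Y + m * c) →
      ρ α (fun _ => (0 : ℝ)) = 0 →
      ∀ (n : ℕ), 0 < n → ∀ (X : Fin n → Ω → ℝ), (∀ i, X i ∈ 𝒳) → ∀ c : ℝ,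
        DQ αbar ρ α (Fin.snoc X (fun _ => c)) = DQ αbar ρ α X)
    -- (ii) [RC]
    ∧ ((∀ β : ℝ, 0 < β → (β : EReal) < αbar → ∀ Y ∈ 𝒳, ∀ l : ℝ, 0 < l →
        ρ β (l • Y) = l * ρ β Y) →
      ∀ (n : ℕ), 0 < n → ∀ (X : Fin n → Ω → ℝ), (∀ i, X i ∈ 𝒳) →
        DQ αbar ρ α (Fin.append X X) = DQ αbar ρ α X) :=
  stmt_10_general 𝒳 hadd hconst αbar ρ α hα hαI
end

section
/- Let α ∈ (0,1) and X = (X_1,…,X_n) ∈ (L^1)^n. If P(X_1+⋯+X_n > ES_α(X_1)+⋯+ES_α(X_n)) > 0, then DQ^ES_α(X) = (1/α) · min_{r∈(0,∞)} E[( r·∑_{i=1}^n (X_i − ES_α(X_i)) + 1 )_+], and the minimum over r ∈ (0,∞) is attained. If P(X_1+⋯+X_n > ES_α(X_1)+⋯+ES_α(X_n)) = 0, then DQ^ES_α(X) = 0. -/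
open MeasureTheory Filter

/-- Value-at-Risk at level `α` (small-`α` convention):
`VaR_α(X) = inf {x : P(X ≤ x) ≥ 1 - α}`. -/
noncomputable def VaR {Ω : Type*} [MeasurableSpace Ω] (μ : MeasureTheory.Measure Ω)
    (α : ℝ) (X : Ω → ℝ) : ℝ :=
  sInf {x : ℝ | ENNReal.ofReal (1 - α) ≤ μ {ω | X ω ≤ x}}

/-- Expected Shortfall at level `α`: `ES_α(X) = (1/α) ∫_0^α VaR_β(X) dβ`. -/
noncomputable def ES {Ω : Type*} [MeasurableSpace Ω] (μ : MeasureTheory.Measure Ω)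
    (α : ℝ) (X : Ω → ℝ) : ℝ :=
  α⁻¹ * ∫ β in (0 : ℝ)..α, VaR μ β X

/-! The Rockafellar–Uryasev formula `β ES_β(Y) = min_t (β t + E[(Y - t)_+])`, attained at
`t = VaR_β(Y)`, follows by comparing the layer-cake formulas for `∫_0^β (VaR_γ(Y) - t)_+ dγ` and
`E[(Y - t)_+]`. With `S = ∑ X_i`, `c = ∑ ES_α(X_i)` and `t = c - 1/r` it turns `ES_β(S) ≤ c` into
`∃ r > 0, E[(r (S - c) + 1)_+] ≤ β`, so the levels `β` in the definition of `DQ` form `[m, 1)`,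
where `m` is the minimum of the continuous, coercive function `r ↦ E[(r (S - c) + 1)_+]`.
Since `E[S] < c`, this function is `≥ 1` for `r ≤ 0` and `< 1` somewhere, so `m` is attained at
some `r > 0`; and `E[S] < c` because `E[X_i] ≤ ES_α(X_i)`, with equality only for a.s. constant
`X_i`, which `P(S > c) > 0` excludes. If `P(S > c) = 0`, then `ES_β(S) ≤ c` for every `β`, and
the levels form `(0, 1)`. -/

open Set ProbabilityTheory Topology

lemma lintegral_ofReal_eq_lintegral_meas_lt {Ω : Type*} [MeasurableSpace Ω] {ν : Measure Ω}
    {f : Ω → ℝ} (hf : AEMeasurable f ν) :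
    ∫⁻ a, ENNReal.ofReal (f a) ∂ν = ∫⁻ s in Ioi 0, ν {a | s < f a} := by
  have h := lintegral_eq_lintegral_meas_lt ν (ae_of_all _ fun a => le_max_right (f a) 0)
    (hf.max aemeasurable_const)
  simp only [ENNReal.ofReal_max, ENNReal.ofReal_zero, max_zero] at h
  rw [h]
  refine setLIntegral_congr_fun measurableSet_Ioi fun s (hs : 0 < s) => ?_
  congr 1
  ext a
  simp [hs.not_gt]

lemma integral_max_zero_eq_toReal_lintegral {Ω : Type*} [MeasurableSpace Ω] {ν : Measure Ω}
    {f : Ω → ℝ} (hf : AEStronglyMeasurable f ν) :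
    ∫ a, max (f a) 0 ∂ν = (∫⁻ a, ENNReal.ofReal (f a) ∂ν).toReal := by
  rw [integral_eq_lintegral_of_nonneg_ae (f := fun a => max (f a) 0)
    (ae_of_all _ fun a => le_max_right _ _)
    (hf.sup aestronglyMeasurable_const)]
  simp only [ENNReal.ofReal_max, ENNReal.ofReal_zero, max_zero]

lemma integral_max_mul_sub_add_one_eq {Ω : Type*} [MeasurableSpace Ω] {ν : Measure Ω}
    {f : Ω → ℝ} {r : ℝ} (hr : 0 < r) (c : ℝ) :
    ∫ a, max (r * (f a - c) + 1) 0 ∂ν = r * ∫ a, max (f a - (c - r⁻¹)) 0 ∂ν := by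
  rw [← integral_const_mul]
  congr 1 with a
  have hshift : r * (f a - c) + 1 = r * (f a - (c - r⁻¹)) := by field_simp; ring
  rw [hshift, mul_max_of_nonneg _ _ hr.le, mul_zero]

section VaR

variable {Ω : Type*} [MeasurableSpace Ω] {μ : Measure Ω} [IsProbabilityMeasure μ] {Y : Ω → ℝ}

lemma cdf_map_eq_measureReal (hY : AEMeasurable Y μ) (x : ℝ) :
    cdf (μ.map Y) x = μ.real {ω | Y ω ≤ x} := by
  have := Measure.isProbabilityMeasure_map hY
  rw [cdf_eq_real, map_measureReal_apply_of_aemeasurable hY measurableSet_Iic]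
  rfl

lemma VaR_le_iff (hY : AEMeasurable Y μ) {β : ℝ} (hβ0 : 0 < β) (hβ1 : β < 1) (s : ℝ) :
    VaR μ β Y ≤ s ↔ 1 - β ≤ μ.real {ω | Y ω ≤ s} := by
  have := Measure.isProbabilityMeasure_map hY
  set F := cdf (μ.map Y)
  have hset : {x | ENNReal.ofReal (1 - β) ≤ μ {ω | Y ω ≤ x}} = {x | 1 - β ≤ F x} := by
    ext x
    simp only [mem_ofPred_eq, ENNReal.ofReal_le_iff_le_toReal (measure_ne_top μ _),
      cdf_map_eq_measureReal hY, measureReal_def, F]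
  have hne : {x | 1 - β ≤ F x}.Nonempty :=
    ((tendsto_cdf_atTop _).eventually (eventually_gt_nhds (by linarith))).exists.imp
      fun _ => le_of_lt
  have hbdd : BddBelow {x | 1 - β ≤ F x} := by
    obtain ⟨x₀, hx₀⟩ := eventually_atBot.1
      ((tendsto_cdf_atBot _).eventually (eventually_lt_nhds (by linarith : (0 : ℝ) < 1 - β)))
    exact ⟨x₀, fun x hx => le_of_not_gt fun hlt => (hx₀ x hlt.le).not_ge hx⟩
  -- the infimum belongs to the set because `F` is right-continuous
  have hmem : 1 - β ≤ F (sInf {x | 1 - β ≤ F x}) := by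
    refine ge_of_tendsto
      ((F.right_continuous _).mono_left (nhdsWithin_mono _ Ioi_subset_Ici_self)) ?_
    filter_upwards [self_mem_nhdsWithin] with x hx
    obtain ⟨y, hy, hyx⟩ := exists_lt_of_csInf_lt hne hx
    exact hy.trans (F.mono hyx.le)
  rw [VaR, hset, ← cdf_map_eq_measureReal hY]
  exact ⟨fun h => hmem.trans (F.mono h), fun h => csInf_le hbdd h⟩

lemma lt_VaR_iff (hY : AEMeasurable Y μ) {γ : ℝ} (hγ0 : 0 < γ) (hγ1 : γ < 1) (s : ℝ) :
    s < VaR μ γ Y ↔ γ < μ.real {ω | s < Y ω} := by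
  have hcompl : {ω | s < Y ω} = {ω | Y ω ≤ s}ᶜ := by ext; simp
  rw [← not_le, VaR_le_iff hY hγ0 hγ1, hcompl,
    probReal_compl_eq_one_sub₀ (nullMeasurableSet_le hY aemeasurable_const), not_le]
  constructor <;> intro h <;> linarith

lemma VaR_antitoneOn (hY : AEMeasurable Y μ) : AntitoneOn (fun γ => VaR μ γ Y) (Ioo 0 1) := by
  intro γ hγ δ hδ hγδ
  rw [VaR_le_iff hY hδ.1 hδ.2]
  linarith [(VaR_le_iff hY hγ.1 hγ.2 _).1 le_rfl]

lemma aemeasurable_VaR (hY : AEMeasurable Y μ) {β : ℝ} (hβ1 : β ≤ 1) :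
    AEMeasurable (fun γ => VaR μ γ Y) (volume.restrict (Ioo 0 β)) :=
  aemeasurable_restrict_of_antitoneOn measurableSet_Ioo
    ((VaR_antitoneOn hY).mono (Ioo_subset_Ioo_right hβ1))

lemma ae_restrict_VaR_le (hY : AEMeasurable Y μ) {β : ℝ} (hβ0 : 0 < β) (hβ1 : β < 1) :
    ∀ᵐ γ ∂(volume.restrict (Ioo 0 β)), VaR μ β Y ≤ VaR μ γ Y :=
  ae_restrict_of_forall_mem measurableSet_Ioo fun _ hγ =>
    VaR_antitoneOn hY ⟨hγ.1, hγ.2.trans hβ1⟩ ⟨hβ0, hβ1⟩ hγ.2.le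

lemma lintegral_ofReal_sub_eq (hY : AEMeasurable Y μ) (t : ℝ) :
    ∫⁻ ω, ENNReal.ofReal (Y ω - t) ∂μ =
      ∫⁻ s in Ioi 0, ENNReal.ofReal (μ.real {ω | t + s < Y ω}) := by
  rw [lintegral_ofReal_eq_lintegral_meas_lt (hY.sub_const t)]
  refine setLIntegral_congr_fun measurableSet_Ioi fun s _ => ?_
  rw [ofReal_measureReal]
  congr 1
  ext ω
  simp [lt_sub_iff_add_lt']

lemma lintegral_ofReal_VaR_sub_eq (hY : AEMeasurable Y μ) {β : ℝ} (hβ1 : β < 1) (t : ℝ) :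
    ∫⁻ γ in Ioo 0 β, ENNReal.ofReal (VaR μ γ Y - t) =
      ∫⁻ s in Ioi 0, ENNReal.ofReal (min β (μ.real {ω | t + s < Y ω})) := by
  rw [lintegral_ofReal_eq_lintegral_meas_lt ((aemeasurable_VaR hY hβ1.le).sub_const t)]
  refine setLIntegral_congr_fun measurableSet_Ioi fun s _ => ?_
  have hset : {γ | s < VaR μ γ Y - t} ∩ Ioo 0 β = Ioo 0 (min β (μ.real {ω | t + s < Y ω})) := by
    ext γ
    simp only [mem_inter_iff, mem_ofPred_eq, mem_Ioo, lt_min_iff, lt_sub_iff_add_lt']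
    constructor
    · rintro ⟨h, hγ0, hγβ⟩
      exact ⟨hγ0, hγβ, (lt_VaR_iff hY hγ0 (hγβ.trans hβ1) _).1 h⟩
    · rintro ⟨hγ0, hγβ, h⟩
      exact ⟨(lt_VaR_iff hY hγ0 (hγβ.trans hβ1) _).2 h, hγ0, hγβ⟩
  rw [Measure.restrict_apply' measurableSet_Ioo, hset, Real.volume_Ioo, sub_zero]

lemma lintegral_ofReal_VaR_sub_le (hY : AEMeasurable Y μ) {β : ℝ} (hβ1 : β < 1) (t : ℝ) :
    ∫⁻ γ in Ioo 0 β, ENNReal.ofReal (VaR μ γ Y - t) ≤ ∫⁻ ω, ENNReal.ofReal (Y ω - t) ∂μ := by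
  rw [lintegral_ofReal_VaR_sub_eq hY hβ1, lintegral_ofReal_sub_eq hY]
  exact lintegral_mono fun s => ENNReal.ofReal_le_ofReal (min_le_right _ _)

lemma lintegral_ofReal_VaR_sub_VaR_eq (hY : AEMeasurable Y μ) {β : ℝ} (hβ0 : 0 < β)
    (hβ1 : β < 1) :
    ∫⁻ γ in Ioo 0 β, ENNReal.ofReal (VaR μ γ Y - VaR μ β Y) =
      ∫⁻ ω, ENNReal.ofReal (Y ω - VaR μ β Y) ∂μ := by
  rw [lintegral_ofReal_VaR_sub_eq hY hβ1, lintegral_ofReal_sub_eq hY]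
  refine setLIntegral_congr_fun measurableSet_Ioi fun s (hs : 0 < s) => ?_
  have hβ : μ.real {ω | VaR μ β Y < Y ω} ≤ β :=
    not_lt.1 ((lt_VaR_iff hY hβ0 hβ1 _).not.1 (lt_irrefl _))
  have hsub : {ω | VaR μ β Y + s < Y ω} ⊆ {ω | VaR μ β Y < Y ω} :=
    fun ω (hω : VaR μ β Y + s < Y ω) => show VaR μ β Y < Y ω by linarith
  rw [min_eq_right ((measureReal_mono hsub).trans hβ)]

end VaR

section ES

variable {Ω : Type*} [MeasurableSpace Ω] {μ : Measure Ω} [IsProbabilityMeasure μ] {Y : Ω → ℝ}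
  {β : ℝ}

lemma integrableOn_VaR (hY : Integrable Y μ) (hβ0 : 0 < β) (hβ1 : β < 1) :
    IntegrableOn (fun γ => VaR μ γ Y) (Ioo 0 β) := by
  set q := VaR μ β Y
  have hsub : IntegrableOn (fun γ => VaR μ γ Y - q) (Ioo 0 β) := by
    refine (lintegral_ofReal_ne_top_iff_integrable
      ((aemeasurable_VaR hY.aemeasurable hβ1.le).sub_const q).aestronglyMeasurable
      ((ae_restrict_VaR_le hY.aemeasurable hβ0 hβ1).mono fun _ => sub_nonneg.2)).1 ?_
    rw [lintegral_ofReal_VaR_sub_VaR_eq hY.aemeasurable hβ0 hβ1]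
    exact (hY.sub (integrable_const q)).lintegral_lt_top.ne
  exact (hsub.add (integrableOn_const measure_Ioo_lt_top.ne)).congr_fun
    (fun γ _ => sub_add_cancel _ q) measurableSet_Ioo

lemma mul_ES_sub_eq_setIntegral (hY : Integrable Y μ) (hβ0 : 0 < β) (hβ1 : β < 1) (t : ℝ) :
    β * ES μ β Y - β * t = ∫ γ in Ioo 0 β, (VaR μ γ Y - t) := by
  rw [integral_sub (integrableOn_VaR hY hβ0 hβ1) (integrableOn_const measure_Ioo_lt_top.ne),
    setIntegral_const, Real.volume_real_Ioo_of_le hβ0.le, ES, ← mul_assoc,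
    mul_inv_cancel₀ hβ0.ne', one_mul, intervalIntegral.integral_of_le hβ0.le,
    integral_Ioc_eq_integral_Ioo, sub_zero, smul_eq_mul]

theorem mul_ES_le (hY : Integrable Y μ) (hβ0 : 0 < β) (hβ1 : β < 1) (t : ℝ) :
    β * ES μ β Y ≤ β * t + ∫ ω, max (Y ω - t) 0 ∂μ := by
  have hsplit := integral_eq_lintegral_pos_part_sub_lintegral_neg_part
    ((integrableOn_VaR hY hβ0 hβ1).sub (integrableOn_const (C := t) measure_Ioo_lt_top.ne))
  have hle := ENNReal.toReal_mono (hY.sub (integrable_const t)).lintegral_lt_top.ne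
    (lintegral_ofReal_VaR_sub_le hY.aemeasurable hβ1 t)
  simp only [Pi.sub_apply] at hsplit hle
  rw [← integral_max_zero_eq_toReal_lintegral (f := fun ω => Y ω - t)
    (hY.sub (integrable_const t)).1] at hle
  linarith [mul_ES_sub_eq_setIntegral hY hβ0 hβ1 t, ENNReal.toReal_nonneg
    (a := ∫⁻ γ in Ioo 0 β, ENNReal.ofReal (-(VaR μ γ Y - t)))]

theorem mul_ES_eq (hY : Integrable Y μ) (hβ0 : 0 < β) (hβ1 : β < 1) :
    β * ES μ β Y = β * VaR μ β Y + ∫ ω, max (Y ω - VaR μ β Y) 0 ∂μ := by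
  have h := mul_ES_sub_eq_setIntegral hY hβ0 hβ1 (VaR μ β Y)
  rw [integral_eq_lintegral_of_nonneg_ae
      ((ae_restrict_VaR_le hY.aemeasurable hβ0 hβ1).mono fun _ => sub_nonneg.2)
      ((integrableOn_VaR hY hβ0 hβ1).sub (integrableOn_const measure_Ioo_lt_top.ne)).1,
    lintegral_ofReal_VaR_sub_VaR_eq hY.aemeasurable hβ0 hβ1,
    ← integral_max_zero_eq_toReal_lintegral (f := fun ω => Y ω - VaR μ β Y)
      (hY.sub (integrable_const _)).1] at h
  linarith

lemma integral_sub_le_integral_max_sub (hY : Integrable Y μ) (t : ℝ) :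
    ∫ ω, Y ω ∂μ - t ≤ ∫ ω, max (Y ω - t) 0 ∂μ := by
  have h := integral_mono (hY.sub (integrable_const t)) (hY.sub (integrable_const t)).pos_part
    fun ω => le_max_left (Y ω - t) 0
  simpa [integral_sub hY (integrable_const t)] using h

lemma integral_max_sub_pos_iff (hY : Integrable Y μ) (c : ℝ) :
    0 < ∫ ω, max (Y ω - c) 0 ∂μ ↔ 0 < μ {ω | c < Y ω} := by
  rw [integral_pos_iff_support_of_nonneg_ae (f := fun ω => max (Y ω - c) 0)
    (ae_of_all _ fun ω => le_max_right _ _)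
    (hY.sub (integrable_const c)).pos_part]
  congr! 3
  ext ω
  simp

theorem integral_le_ES (hY : Integrable Y μ) (hβ0 : 0 < β) (hβ1 : β < 1) :
    ∫ ω, Y ω ∂μ ≤ ES μ β Y := by
  have hES := mul_ES_eq hY hβ0 hβ1
  have h1 := integral_sub_le_integral_max_sub hY (VaR μ β Y)
  have h2 : 0 ≤ ∫ ω, max (Y ω - VaR μ β Y) 0 ∂μ := integral_nonneg fun ω => le_max_right _ _
  refine le_of_mul_le_mul_left ?_ hβ0
  rcases le_total (VaR μ β Y) (∫ ω, Y ω ∂μ) with h | h <;> nlinarith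

theorem ae_eq_integral_of_ES_le_integral (hY : Integrable Y μ) (hβ0 : 0 < β) (hβ1 : β < 1)
    (h : ES μ β Y ≤ ∫ ω, Y ω ∂μ) :
    Y =ᵐ[μ] fun _ => ∫ ω, Y ω ∂μ := by
  have hES := mul_ES_eq hY hβ0 hβ1
  set m := ∫ ω, Y ω ∂μ
  set q := VaR μ β Y
  have h1 := integral_sub_le_integral_max_sub hY q
  have h2 : 0 ≤ ∫ ω, max (Y ω - q) 0 ∂μ := integral_nonneg fun ω => le_max_right _ _
  have hβES : β * ES μ β Y ≤ β * m := mul_le_mul_of_nonneg_left h hβ0.le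
  have hqm : q = m := by
    rcases lt_or_ge q m with hlt | hge <;> nlinarith
  have hzero : ∫ ω, max (Y ω - q) 0 ∂μ = 0 := by nlinarith
  have hle : Y ≤ᵐ[μ] fun _ => m := by
    filter_upwards [(integral_eq_zero_iff_of_nonneg_ae (ae_of_all _ fun ω => le_max_right _ _)
      (hY.sub (integrable_const q)).pos_part).1 hzero] with ω hω
    rw [← hqm]
    simpa [sub_nonpos] using hω
  exact (integral_eq_iff_of_ae_le hY (integrable_const m) hle).1 (by simp [m])

theorem ES_le_of_ae_le (hY : Integrable Y μ) (hβ0 : 0 < β) (hβ1 : β < 1) {c : ℝ}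
    (h : ∀ᵐ ω ∂μ, Y ω ≤ c) :
    ES μ β Y ≤ c := by
  have hzero : ∫ ω, max (Y ω - c) 0 ∂μ = 0 :=
    integral_eq_zero_of_ae (h.mono fun ω hω => by simpa using hω)
  have := mul_ES_le hY hβ0 hβ1 c
  rw [hzero, add_zero] at this
  exact le_of_mul_le_mul_left this hβ0

theorem ES_le_iff_exists_pos (hY : Integrable Y μ) (hβ0 : 0 < β) (hβ1 : β < 1) {c : ℝ}
    (hc : 0 < ∫ ω, max (Y ω - c) 0 ∂μ) :
    ES μ β Y ≤ c ↔ ∃ r, 0 < r ∧ ∫ ω, max (r * (Y ω - c) + 1) 0 ∂μ ≤ β := by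
  constructor
  · intro h
    have hES := mul_ES_eq hY hβ0 hβ1
    set q := VaR μ β Y
    have hβES : β * ES μ β Y ≤ β * c := mul_le_mul_of_nonneg_left h hβ0.le
    have h2 : 0 ≤ ∫ ω, max (Y ω - q) 0 ∂μ := integral_nonneg fun ω => le_max_right _ _
    have hqc : q < c := by
      by_contra! hcq
      have hqc : q = c := by nlinarith
      rw [hqc] at hES
      nlinarith
    refine ⟨(c - q)⁻¹, inv_pos.2 (sub_pos.2 hqc), ?_⟩
    rw [integral_max_mul_sub_add_one_eq (inv_pos.2 (sub_pos.2 hqc)), inv_inv, sub_sub_cancel,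
      inv_mul_le_iff₀ (sub_pos.2 hqc)]
    nlinarith
  · rintro ⟨r, hr, hfr⟩
    have hES := mul_ES_le hY hβ0 hβ1 (c - r⁻¹)
    rw [integral_max_mul_sub_add_one_eq hr] at hfr
    have hle : ∫ ω, max (Y ω - (c - r⁻¹)) 0 ∂μ ≤ β * r⁻¹ := by
      rw [← div_eq_mul_inv, le_div_iff₀ hr]
      linarith
    refine le_of_mul_le_mul_left ?_ hβ0
    nlinarith

end ES

section Objective

variable {Ω : Type*} [MeasurableSpace Ω] {ν : Measure Ω} [IsFiniteMeasure ν] {f : Ω → ℝ}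

lemma integrable_max_mul_sub_add_one (hf : Integrable f ν) (c r : ℝ) :
    Integrable (fun a => max (r * (f a - c) + 1) 0) ν :=
  (((hf.sub (integrable_const c)).const_mul r).add (integrable_const 1)).pos_part

lemma lipschitzWith_integral_max_mul_sub_add_one (hf : Integrable f ν) (c : ℝ) :
    LipschitzWith (∫ a, |f a - c| ∂ν).toNNReal
      (fun r => ∫ a, max (r * (f a - c) + 1) 0 ∂ν) := by
  refine LipschitzWith.of_dist_le_mul fun r s => ?_
  rw [Real.dist_eq, Real.dist_eq, Real.coe_toNNReal _ (integral_nonneg fun _ => abs_nonneg _),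
    ← integral_sub (integrable_max_mul_sub_add_one hf c r)
      (integrable_max_mul_sub_add_one hf c s), ← integral_mul_const]
  refine (abs_integral_le_integral_abs).trans (integral_mono
    ((integrable_max_mul_sub_add_one hf c r).sub (integrable_max_mul_sub_add_one hf c s)).abs
    ((hf.sub (integrable_const c)).abs.mul_const _) fun a => ?_)
  refine (abs_max_sub_max_le_abs _ _ _).trans_eq ?_
  rw [← abs_mul]
  ring_nf

lemma mul_integral_max_sub_le (hf : Integrable f ν) {r : ℝ} (hr : 0 ≤ r) (c : ℝ) :
    r * ∫ a, max (f a - c) 0 ∂ν ≤ ∫ a, max (r * (f a - c) + 1) 0 ∂ν := by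
  rw [← integral_const_mul]
  refine integral_mono ((hf.sub (integrable_const c)).pos_part.const_mul r)
    (integrable_max_mul_sub_add_one hf c r) fun a => ?_
  rw [mul_max_of_nonneg _ _ hr, mul_zero]
  exact max_le_max (by linarith) le_rfl

lemma tendsto_integral_max_sub_atBot (hf : Integrable f ν) :
    Tendsto (fun u => ∫ a, max (u - f a) 0 ∂ν) atBot (𝓝 0) := by
  have h := tendsto_integral_filter_of_dominated_convergence (l := atBot)
    (F := fun u a => max (u - f a) 0) (f := fun _ => 0) (fun a => max (-f a) 0)
    (Eventually.of_forall fun u => ((integrable_const u).sub hf).pos_part.aestronglyMeasurable)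
    ?_ hf.neg.pos_part ?_
  · simpa using h
  · filter_upwards [eventually_le_atBot 0] with u hu
    refine ae_of_all _ fun a => ?_
    rw [Real.norm_of_nonneg (le_max_right _ _)]
    exact max_le_max (by linarith) le_rfl
  · exact ae_of_all _ fun a => tendsto_const_nhds.congr' <| by
      filter_upwards [eventually_le_atBot (f a)] with u hu
      exact (max_eq_right (by linarith)).symm

end Objective

section Minimization

variable {Ω : Type*} [MeasurableSpace Ω] {μ : Measure Ω} [IsProbabilityMeasure μ] {S : Ω → ℝ}
  {c : ℝ}

lemma one_add_mul_sub_le_integral_max (hS : Integrable S μ) (r : ℝ) :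
    1 + r * (∫ ω, S ω ∂μ - c) ≤ ∫ ω, max (r * (S ω - c) + 1) 0 ∂μ := by
  have hlin : Integrable (fun ω => r * (S ω - c)) μ := (hS.sub (integrable_const c)).const_mul r
  have h := integral_mono (f := fun ω => r * (S ω - c) + 1) (hlin.add (integrable_const 1))
    (integrable_max_mul_sub_add_one hS c r) fun ω => le_max_left (r * (S ω - c) + 1) 0
  rw [integral_add (f := fun ω => r * (S ω - c)) hlin (integrable_const 1), integral_const_mul,
    integral_sub (g := fun _ => c) hS (integrable_const c)] at h
  simpa [add_comm] using h

lemma exists_pos_integral_max_mul_sub_add_one_lt_one (hS : Integrable S μ)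
    (hmean : ∫ ω, S ω ∂μ < c) :
    ∃ r, 0 < r ∧ ∫ ω, max (r * (S ω - c) + 1) 0 ∂μ < 1 := by
  -- with `r = (c - u)⁻¹` the integral equals `1 - r (c - E[S] - E[(u - S)_+])`, and
  -- `E[(u - S)_+] → 0` as `u → -∞`
  obtain ⟨u, hu, huc⟩ := (((tendsto_integral_max_sub_atBot hS).eventually
    (eventually_lt_nhds (sub_pos.2 hmean))).and (eventually_lt_atBot c)).exists
  have hsplit : ∫ ω, max (S ω - u) 0 ∂μ = ∫ ω, S ω ∂μ - u + ∫ ω, max (u - S ω) 0 ∂μ := by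
    have hpt : ∀ ω, max (S ω - u) 0 = (S ω - u) + max (u - S ω) 0 := fun ω => by
      have h := max_zero_sub_eq_self (S ω - u)
      rw [neg_sub] at h
      linarith
    simp_rw [hpt]
    rw [integral_add (f := fun ω => S ω - u) (g := fun ω => max (u - S ω) 0)
      (hS.sub (integrable_const u)) ((integrable_const u).sub hS).pos_part,
      integral_sub (g := fun _ => u) hS (integrable_const u)]
    simp
  have hr : 0 < (c - u)⁻¹ := inv_pos.2 (sub_pos.2 huc)
  refine ⟨(c - u)⁻¹, hr, ?_⟩
  rw [integral_max_mul_sub_add_one_eq hr, inv_inv, sub_sub_cancel, hsplit,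
    inv_mul_lt_iff₀ (sub_pos.2 huc)]
  linarith

lemma tendsto_integral_max_mul_sub_add_one_cocompact (hS : Integrable S μ)
    (hpos : 0 < ∫ ω, max (S ω - c) 0 ∂μ) (hmean : ∫ ω, S ω ∂μ < c) :
    Tendsto (fun r => ∫ ω, max (r * (S ω - c) + 1) 0 ∂μ) (cocompact ℝ) atTop := by
  rw [cocompact_eq_atBot_atTop, tendsto_sup]
  constructor
  · refine tendsto_atTop_mono (one_add_mul_sub_le_integral_max hS) ?_
    exact tendsto_atTop_add_const_left _ 1 (tendsto_id.atBot_mul_const_of_neg (sub_neg.2 hmean))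
  · refine tendsto_atTop_mono' _ ((eventually_ge_atTop 0).mono fun r hr =>
      mul_integral_max_sub_le hS hr c) ?_
    exact tendsto_id.atTop_mul_const hpos

theorem exists_pos_forall_integral_max_mul_sub_add_one_le (hS : Integrable S μ)
    (hpos : 0 < ∫ ω, max (S ω - c) 0 ∂μ) (hmean : ∫ ω, S ω ∂μ < c) :
    ∃ r, 0 < r ∧
      (∀ s, ∫ ω, max (r * (S ω - c) + 1) 0 ∂μ ≤ ∫ ω, max (s * (S ω - c) + 1) 0 ∂μ) ∧
      ∫ ω, max (r * (S ω - c) + 1) 0 ∂μ < 1 := by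
  obtain ⟨r, hr⟩ := (lipschitzWith_integral_max_mul_sub_add_one hS c).continuous.exists_forall_le
    (tendsto_integral_max_mul_sub_add_one_cocompact hS hpos hmean)
  obtain ⟨r₁, -, hr₁⟩ := exists_pos_integral_max_mul_sub_add_one_lt_one hS hmean
  have hlt := (hr r₁).trans_lt hr₁
  refine ⟨r, ?_, hr, hlt⟩
  by_contra! hr0
  nlinarith [one_add_mul_sub_le_integral_max hS (c := c) r]

end Minimization

lemma DQ_one_eq_of_forall_le_iff {Ω : Type*} {n : ℕ} {ρ : ℝ → (Ω → ℝ) → ℝ} {α : ℝ}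
    {X : Fin n → Ω → ℝ} {a : ℝ} (ha0 : 0 ≤ a) (ha1 : a < 1)
    (h : ∀ β, 0 < β → β < 1 → (ρ β (fun ω => ∑ i, X i ω) ≤ ∑ i, ρ α (X i) ↔ a ≤ β)) :
    DQ 1 ρ α X = ((a * α⁻¹ : ℝ) : EReal) := by
  have hset : {β : ℝ | 0 < β ∧ (β : EReal) < 1 ∧ ρ β (fun ω => ∑ i, X i ω) ≤ ∑ i, ρ α (X i)} =
      Ioo 0 1 ∩ Ici a := by
    ext β
    simp only [mem_ofPred_eq, mem_inter_iff, mem_Ioo, mem_Ici, ← EReal.coe_one,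
      EReal.coe_lt_coe_iff]
    constructor
    · rintro ⟨hβ0, hβ1, hρ⟩
      exact ⟨⟨hβ0, hβ1⟩, (h β hβ0 hβ1).1 hρ⟩
    · rintro ⟨⟨hβ0, hβ1⟩, hβa⟩
      exact ⟨hβ0, hβ1, (h β hβ0 hβ1).2 hβa⟩
  have hinf : sInf (Ioo 0 1 ∩ Ici a) = a := by
    rcases ha0.eq_or_lt with rfl | ha0
    · rw [inter_eq_left.2 fun β hβ => mem_Ici.2 hβ.1.le, csInf_Ioo zero_lt_one]
    · have hIco : Ioo 0 1 ∩ Ici a = Ico a 1 := by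
        ext β
        exact ⟨fun ⟨⟨_, h1⟩, ha⟩ => ⟨ha, h1⟩, fun ⟨ha, h1⟩ => ⟨⟨ha0.trans_le ha, h1⟩, ha⟩⟩
      rw [hIco, csInf_Ico ha1]
  have hne : (Ioo 0 1 ∩ Ici a).Nonempty :=
    ⟨(a + 1) / 2, ⟨by linarith, by linarith⟩, mem_Ici.2 (by linarith)⟩
  rw [DQ, hset, if_pos hne, hinf, EReal.coe_mul]

theorem integral_sum_lt_sum_ES {Ω ι : Type*} [MeasurableSpace Ω] {μ : Measure Ω}
    [IsProbabilityMeasure μ] [Fintype ι] {X : ι → Ω → ℝ} (hX : ∀ i, Integrable (X i) μ)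
    {α : ℝ} (hα0 : 0 < α) (hα1 : α < 1) (h : 0 < μ {ω | ∑ i, ES μ α (X i) < ∑ i, X i ω}) :
    ∫ ω, ∑ i, X i ω ∂μ < ∑ i, ES μ α (X i) := by
  have hle : ∀ i ∈ Finset.univ, ∫ ω, X i ω ∂μ ≤ ES μ α (X i) :=
    fun i _ => integral_le_ES (hX i) hα0 hα1
  rw [integral_finsetSum _ fun i _ => hX i]
  refine (Finset.sum_le_sum hle).lt_of_ne fun heq => h.ne' ?_
  have hconst : ∀ᵐ ω ∂μ, ∀ i, X i ω = ∫ ω, X i ω ∂μ := ae_all_iff.2 fun i =>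
    ae_eq_integral_of_ES_le_integral (hX i) hα0 hα1
      ((Finset.sum_eq_sum_iff_of_le hle).1 heq i (Finset.mem_univ i)).ge
  refine measure_eq_zero_iff_ae_notMem.2 ?_
  filter_upwards [hconst] with ω hω
  simp [hω, heq]

theorem stmt_12_general {Ω : Type*} [MeasurableSpace Ω] (μ : Measure Ω) [IsProbabilityMeasure μ]
    (n : ℕ) (α : ℝ) (hα0 : 0 < α) (hα1 : α < 1)
    (X : Fin n → Ω → ℝ) (hX : ∀ i, Integrable (X i) μ) :
    (0 < μ {ω | ∑ i, ES μ α (X i) < ∑ i, X i ω} →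
      ∃ r : ℝ, 0 < r ∧
        (∀ s : ℝ, 0 < s →
          ∫ ω, max (r * (∑ i, (X i ω - ES μ α (X i))) + 1) 0 ∂μ ≤
            ∫ ω, max (s * (∑ i, (X i ω - ES μ α (X i))) + 1) 0 ∂μ) ∧
        DQ 1 (fun β => ES μ β) α X
          = ((α⁻¹ * ∫ ω, max (r * (∑ i, (X i ω - ES μ α (X i))) + 1) 0 ∂μ : ℝ) : EReal))
    ∧ (μ {ω | ∑ i, ES μ α (X i) < ∑ i, X i ω} = 0 →
        DQ 1 (fun β => ES μ β) α X = 0) := by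
  set S : Ω → ℝ := fun ω => ∑ i, X i ω
  set c := ∑ i, ES μ α (X i)
  have hS : Integrable S μ := integrable_finsetSum _ fun i _ => hX i
  have hsum : ∀ ω, ∑ i, (X i ω - ES μ α (X i)) = S ω - c := fun ω => Finset.sum_sub_distrib ..
  simp only [hsum]
  refine ⟨fun hpos => ?_, fun hzero => ?_⟩
  · have hpos' := (integral_max_sub_pos_iff hS c).2 hpos
    obtain ⟨r, hr, hmin, hlt⟩ := exists_pos_forall_integral_max_mul_sub_add_one_le hS hpos'
      (integral_sum_lt_sum_ES hX hα0 hα1 hpos)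
    refine ⟨r, hr, fun s _ => hmin s, ?_⟩
    rw [mul_comm]
    refine DQ_one_eq_of_forall_le_iff (integral_nonneg fun _ => le_max_right _ _) hlt
      fun β hβ0 hβ1 => ?_
    rw [ES_le_iff_exists_pos hS hβ0 hβ1 hpos']
    exact ⟨fun ⟨s, _, hs⟩ => (hmin s).trans hs, fun h => ⟨r, hr, h⟩⟩
  · have hle : ∀ᵐ ω ∂μ, S ω ≤ c := ae_iff.2 (by simpa only [not_le] using hzero)
    simpa using DQ_one_eq_of_forall_le_iff (ρ := fun β => ES μ β) (α := α) (X := X) le_rfl one_pos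
      fun β hβ0 hβ1 => iff_of_true (ES_le_of_ae_le hS hβ0 hβ1 hle) hβ0.le

/-- minimization formula for `DQ^ES_α`. If the total loss exceeds the
pooled ES capital with positive probability, then
`DQ^ES_α(X) = (1/α) min_{r>0} E[(r ∑ (X_i - ES_α(X_i)) + 1)_+]` with the minimum
attained; otherwise `DQ^ES_α(X) = 0`. -/
theorem stmt_12 {Ω : Type*} [MeasurableSpace Ω] (μ : Measure Ω) [IsProbabilityMeasure μ]
    (hatomless : ∀ s : Set Ω, MeasurableSet s → 0 < μ s →
      ∃ t, t ⊆ s ∧ MeasurableSet t ∧ 0 < μ t ∧ μ t < μ s)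
    (n : ℕ) (hn : 0 < n)
    (α : ℝ) (hα0 : 0 < α) (hα1 : α < 1)
    (X : Fin n → Ω → ℝ) (hX : ∀ i, Integrable (X i) μ) :
    (0 < μ {ω | ∑ i, ES μ α (X i) < ∑ i, X i ω} →
      ∃ r : ℝ, 0 < r ∧
        (∀ s : ℝ, 0 < s →
          ∫ ω, max (r * (∑ i, (X i ω - ES μ α (X i))) + 1) 0 ∂μ ≤
            ∫ ω, max (s * (∑ i, (X i ω - ES μ α (X i))) + 1) 0 ∂μ) ∧
        DQ 1 (fun β => ES μ β) α X
          = ((α⁻¹ * ∫ ω, max (r * (∑ i, (X i ω - ES μ α (X i))) + 1) 0 ∂μ : ℝ) : EReal))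
    ∧ (μ {ω | ∑ i, ES μ α (X i) < ∑ i, X i ω} = 0 →
        DQ 1 (fun β => ES μ β) α X = 0) :=
  stmt_12_general μ n α hα0 hα1 X hX
end
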